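/- arXiv:2307.08241 — 4 statements merged into one kernel-verified Lean document; each statement's English description precedes it below -/
import Mathlib

section
/- Let f(ξ) = ξ³ - ξ (so m = 1) and F(ξ) = ξ², with ε > 0, λ > 0, δ ∈ (0,1), and define Θ_δ^λ(ξ) = (-(1/ε)(ξ³-ξ) + λξ)/(1 + δξ²). Then there exists a constant C > 0 (independent of ε, λ, δ, ξ) such that |(Θ_δ^λ)''(ξ)| ≤ C(1/ε + λ)(1 + |ξ|) for all ξ ∈ ℝ. -/
/-- second-derivative bound for the tamed Allen–Cahn drift:
there is `C > 0` independent of `ε, λ, δ, ξ` with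
`|(Θ_δ^λ)''(ξ)| ≤ C(1/ε + λ)(1 + |ξ|)`. -/
theorem stmt3 :
    ∃ C > (0:ℝ), ∀ ε lam δ : ℝ, 0 < ε → 0 < lam → δ ∈ Set.Ioo (0:ℝ) 1 →
      ∀ Θ : ℝ → ℝ,
        (∀ ξ : ℝ, Θ ξ = (-(1/ε) * (ξ^3 - ξ) + lam * ξ) / (1 + δ * ξ^2)) →
        ∀ ξ : ℝ, |deriv (deriv Θ) ξ| ≤ C * (1/ε + lam) * (1 + |ξ|) := by
  refine ⟨12, by norm_num, ?_⟩
  intro ε lam δ hε hlam hδ Θ hΘ ξ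
  obtain ⟨hδ0, hδ1⟩ := hδ
  set b := 1/ε with hb
  set c := 1/ε + lam with hc
  have hb0 : 0 < b := by positivity
  have hc0 : 0 < c := by rw [hc]; positivity
  have hDpos : ∀ x : ℝ, 0 < 1 + δ * x^2 := fun x => by positivity
  have hDne : ∀ x : ℝ, (1 + δ * x^2) ≠ 0 := fun x => (hDpos x).ne'
  have hΘeq : Θ = fun x => (-b * x^3 + c * x) / (1 + δ * x^2) := by
    funext x; rw [hΘ x]; congr 1; rw [hc]; ring
  have hD1 : ∀ x : ℝ, HasDerivAt (fun y : ℝ => 1 + δ * y^2) (2*δ*x) x := by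
    intro x
    have := ((hasDerivAt_pow 2 x).const_mul δ).const_add 1
    exact this.congr_deriv (by ring)
  have hΘ' : deriv Θ = fun x => (-b*δ*x^4 - 3*b*x^2 - c*δ*x^2 + c) / (1 + δ*x^2)^2 := by
    funext x
    have hN : HasDerivAt (fun y : ℝ => -b * y^3 + c * y) (-3*b*x^2 + c) x := by
      have := ((hasDerivAt_pow 3 x).const_mul (-b)).add ((hasDerivAt_id x).const_mul c)
      exact this.congr_deriv (by ring)
    have h := hN.div (hD1 x) (hDne x)
    rw [hΘeq, show deriv (fun x => (-b * x ^ 3 + c * x) / (1 + δ * x ^ 2)) x = _ from h.deriv]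
    field_simp
    ring
  have hΘ'' : deriv (deriv Θ) ξ = 2*ξ*(b + c*δ)*(δ*ξ^2 - 3) / (1 + δ*ξ^2)^3 := by
    rw [hΘ']
    have hN : HasDerivAt (fun y : ℝ => -b*δ*y^4 - 3*b*y^2 - c*δ*y^2 + c)
        (-4*b*δ*ξ^3 - 6*b*ξ - 2*c*δ*ξ) ξ := by
      have := ((((hasDerivAt_pow 4 ξ).const_mul (-b*δ)).sub
        ((hasDerivAt_pow 2 ξ).const_mul (3*b))).sub
        ((hasDerivAt_pow 2 ξ).const_mul (c*δ))).add_const c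
      exact this.congr_deriv (by ring)
    have hDD : HasDerivAt (fun y : ℝ => (1 + δ*y^2)^2) (2*(1+δ*ξ^2)*(2*δ*ξ)) ξ := by
      have := (hD1 ξ).pow 2
      exact this.congr_deriv (by ring)
    have h := hN.div hDD (pow_ne_zero 2 (hDne ξ))
    rw [show deriv (fun x => (-b * δ * x ^ 4 - 3 * b * x ^ 2 - c * δ * x ^ 2 + c) / (1 + δ * x ^ 2) ^ 2) ξ = _ from h.deriv]
    rw [div_eq_div_iff (by positivity) (by positivity)]
    ring
  rw [hΘ'']
  set D := 1 + δ*ξ^2 with hDdef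
  have hDpos' : (0:ℝ) < D := hDpos ξ
  have hD1' : (1:ℝ) ≤ D := by nlinarith [sq_nonneg ξ]
  have hD3 : D ≤ D^3 := by
    calc D = D^1 := (pow_one D).symm
      _ ≤ D^3 := pow_le_pow_right₀ hD1' (by norm_num)
  rw [abs_div, abs_of_pos (by positivity : (0:ℝ) < D^3), div_le_iff₀ (by positivity)]
  have key : |2*ξ*(b + c*δ)*(δ*ξ^2 - 3)| = 2 * |ξ| * (b+c*δ) * |δ*ξ^2 - 3| := by
    rw [abs_mul, abs_mul, abs_mul, abs_two,
      abs_of_nonneg (by positivity : (0:ℝ) ≤ b + c*δ)]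
  rw [key]
  have h1 : |δ*ξ^2 - 3| ≤ 3*D^3 := by
    rw [abs_le]
    constructor <;> nlinarith
  have h2 : b + c*δ ≤ 2*c := by
    have : b ≤ c := by rw [hc]; linarith
    nlinarith
  have h3 : |ξ| ≤ 1 + |ξ| := by linarith [abs_nonneg ξ]
  calc 2 * |ξ| * (b+c*δ) * |δ*ξ^2 - 3| ≤ 2 * (1+|ξ|) * (2*c) * (3*D^3) := by
        gcongr <;> positivity
    _ = 12 * c * (1+|ξ|) * D^3 := by ring
end

section
/- Let m ≥ 1, a > 0, b > 0. Suppose X : (0,∞) → ℝ is differentiable and satisfies d/dt (X(t)^{2m}) ≤ -2m·a·X(t)^{4m} + 2m·b·X(t)^{2m} for all t > 0. Then for all t > 0, X(t)^{2m} ≤ b / ( a (1 - e^{-2mbt}) ); in particular |X(t)| ≤ (b/(a(1-e^{-2mbt})))^{1/(2m)}, a bound independent of the initial condition X(0). -/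
/-- smoothing bound for `X` with
`d/dt(X^{2m}) ≤ -2ma X^{4m} + 2mb X^{2m}`:
`X(t)^{2m} ≤ b/(a(1-e^{-2mbt}))` for `t > 0`, independently of `X(0)`. -/
theorem stmt7 (m : ℕ) (hm : 1 ≤ m) (a b : ℝ) (ha : 0 < a) (hb : 0 < b)
    (X : ℝ → ℝ) (hdiff : ∀ t > (0:ℝ), DifferentiableAt ℝ X t)
    (hineq : ∀ t > (0:ℝ),
      deriv (fun s => X s ^ (2*m)) t
        ≤ -(2*(m:ℝ)) * a * X t ^ (4*m) + (2*(m:ℝ)) * b * X t ^ (2*m)) :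
    ∀ t > (0:ℝ),
      X t ^ (2*m) ≤ b / (a * (1 - Real.exp (-(2*(m:ℝ)*b*t))))
      ∧ |X t| ≤ (b / (a * (1 - Real.exp (-(2*(m:ℝ)*b*t))))) ^ ((1:ℝ)/(2*(m:ℝ))) := by
  have hm1 : (1:ℝ) ≤ (m:ℝ) := by exact_mod_cast hm
  have hmpos : (0:ℝ) < (m:ℝ) := lt_of_lt_of_le one_pos hm1
  intro t ht
  set c : ℝ := 2*(m:ℝ)*b with hc_def
  have hc : 0 < c := by positivity
  -- the auxiliary function v = e^{-ct} X^{2m}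
  set v : ℝ → ℝ := fun s => Real.exp (-(c*s)) * X s ^ (2*m) with hv_def
  have hvnonneg : ∀ s, 0 ≤ v s := by
    intro s
    have : (0:ℝ) ≤ X s ^ (2*m) := by rw [pow_mul]; positivity
    exact mul_nonneg (Real.exp_pos _).le this
  -- derivative of v
  have hEd : ∀ s : ℝ, HasDerivAt (fun u => Real.exp (-(c*u))) (Real.exp (-(c*s)) * (-c)) s := by
    intro s
    have h1 : HasDerivAt (fun u : ℝ => -(c*u)) (-c) s := by
      simpa using ((hasDerivAt_id s).const_mul c).fun_neg
    exact h1.exp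
  have hXd : ∀ s ∈ Set.Ioi (0:ℝ), DifferentiableAt ℝ (fun u => X u ^ (2*m)) s := by
    intro s hs
    exact (hdiff s hs).pow _
  have hvD : ∀ s ∈ Set.Ioi (0:ℝ), HasDerivAt v
      (Real.exp (-(c*s)) * (-c) * X s ^ (2*m)
        + Real.exp (-(c*s)) * deriv (fun u => X u ^ (2*m)) s) s := by
    intro s hs
    exact (hEd s).mul ((hXd s hs).hasDerivAt)
  have hvderiv : ∀ s ∈ Set.Ioi (0:ℝ),
      deriv v s ≤ -(2*(m:ℝ)*a) * Real.exp (c*s) * (v s)^2 := by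
    intro s hs
    rw [(hvD s hs).deriv]
    have hIneq := hineq s hs
    have hExp : (0:ℝ) < Real.exp (-(c*s)) := Real.exp_pos _
    have h1 : Real.exp (-(c*s)) * deriv (fun u => X u ^ (2*m)) s
        ≤ Real.exp (-(c*s)) * (-(2*(m:ℝ)) * a * X s ^ (4*m) + (2*(m:ℝ)) * b * X s ^ (2*m)) :=
      mul_le_mul_of_nonneg_left hIneq hExp.le
    have hpow : X s ^ (4*m) = (X s ^ (2*m))^2 := by
      rw [← pow_mul]; ring_nf
    have hEE : Real.exp (c*s) * Real.exp (-(c*s)) ^ 2 = Real.exp (-(c*s)) := by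
      rw [sq, ← Real.exp_add, ← Real.exp_add]
      ring_nf
    have heq : -(2*(m:ℝ)*a) * Real.exp (c*s) * (v s)^2
        = Real.exp (-(c*s)) * (-(2*(m:ℝ)) * a * X s ^ (4*m)) := by
      simp only [hv_def]
      rw [hpow, mul_pow]
      linear_combination (-(2*(m:ℝ)*a) * (X s ^ (2*m))^2) * hEE
    have h2 : Real.exp (-(c*s)) * (-c) * X s ^ (2*m)
        + Real.exp (-(c*s)) * (-(2*(m:ℝ)) * a * X s ^ (4*m) + (2*(m:ℝ)) * b * X s ^ (2*m))
        = Real.exp (-(c*s)) * (-(2*(m:ℝ)) * a * X s ^ (4*m)) := by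
      rw [hc_def]; ring
    linarith [h1, h2.ge, heq.ge, heq.le]
  have hvderiv0 : ∀ s ∈ Set.Ioi (0:ℝ), deriv v s ≤ 0 := by
    intro s hs
    have := hvderiv s hs
    have h0 : -(2*(m:ℝ)*a) * Real.exp (c*s) * (v s)^2 ≤ 0 := by
      have : (0:ℝ) ≤ (2*(m:ℝ)*a) * Real.exp (c*s) * (v s)^2 := by positivity
      linarith
    linarith
  have hvdiff : ∀ s ∈ Set.Ioi (0:ℝ), DifferentiableAt ℝ v s :=
    fun s hs => (hvD s hs).differentiableAt
  have hvcont : ContinuousOn v (Set.Ioi 0) :=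
    fun s hs => ((hvdiff s hs).continuousAt).continuousWithinAt
  have hanti : AntitoneOn v (Set.Ioi 0) := by
    apply antitoneOn_of_deriv_nonpos (convex_Ioi 0) hvcont
    · rw [interior_Ioi]
      exact fun s hs => (hvdiff s hs).differentiableWithinAt
    · rw [interior_Ioi]
      exact hvderiv0
  -- positivity facts about the bound
  have hclt : Real.exp (-(c*t)) < 1 := by
    rw [Real.exp_lt_one_iff]
    have : 0 < c*t := mul_pos hc ht
    linarith
  have hBpos : 0 < b / (a * (1 - Real.exp (-(c*t)))) := by
    apply div_pos hb
    apply mul_pos ha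
    linarith
  -- main bound
  have hmain : X t ^ (2*m) ≤ b / (a * (1 - Real.exp (-(c*t)))) := by
    rcases eq_or_lt_of_le (hvnonneg t) with hvt | hvt
    · -- v t = 0, so X t ^ (2m) = 0
      have hx0 : X t ^ (2*m) = 0 := by
        have := hvt.symm
        simp only [hv_def] at this
        rcases mul_eq_zero.mp this with h | h
        · exact absurd h (Real.exp_ne_zero _)
        · exact h
      rw [hx0]
      exact hBpos.le
    · -- v t > 0
      have hvpos : ∀ s ∈ Set.Ioc (0:ℝ) t, 0 < v s := by
        intro s hs
        exact lt_of_lt_of_le hvt (hanti hs.1 ht hs.2)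
      -- g s = (v s)⁻¹ - (a/b) e^{cs} is monotone on (0, t]
      set g : ℝ → ℝ := fun s => (v s)⁻¹ - (a/b) * Real.exp (c*s) with hg_def
      have hgD : ∀ s ∈ Set.Ioo (0:ℝ) t, HasDerivAt g
          (-(deriv v s) / (v s)^2 - (a/b) * (Real.exp (c*s) * c)) s := by
        intro s hs
        have hs' : s ∈ Set.Ioi (0:ℝ) := hs.1
        have hvne : v s ≠ 0 := (hvpos s ⟨hs.1, hs.2.le⟩).ne'
        have h1 : HasDerivAt (fun u => (v u)⁻¹) (-(deriv v s) / (v s)^2) s :=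
          (hvdiff s hs').hasDerivAt.inv hvne
        have h2 : HasDerivAt (fun u : ℝ => (a/b) * Real.exp (c*u))
            ((a/b) * (Real.exp (c*s) * c)) s := by
          have h3 : HasDerivAt (fun u : ℝ => c*u) c s := by
            simpa using (hasDerivAt_id s).const_mul c
          exact (h3.exp).const_mul (a/b)
        exact h1.sub h2
      have hgderiv : ∀ s ∈ Set.Ioo (0:ℝ) t, 0 ≤ deriv g s := by
        intro s hs
        rw [(hgD s hs).deriv]
        have hvs : 0 < v s := hvpos s ⟨hs.1, hs.2.le⟩
        have hkey := hvderiv s hs.1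
        have hco : (a/b) * (Real.exp (c*s) * c) = 2*(m:ℝ)*a * Real.exp (c*s) := by
          rw [hc_def]; field_simp
        rw [hco]
        rw [sub_nonneg, le_div_iff₀ (by positivity : (0:ℝ) < (v s)^2)]
        nlinarith [hkey]
      have hgmono : MonotoneOn g (Set.Ioc 0 t) := by
        apply monotoneOn_of_deriv_nonneg (convex_Ioc 0 t)
        · apply ContinuousOn.sub
          · apply ContinuousOn.inv₀
            · exact hvcont.mono Set.Ioc_subset_Ioi_self
            · exact fun s hs => (hvpos s hs).ne'
          · exact (continuous_const.mul (Real.continuous_exp.comp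
              (continuous_const.mul continuous_id))).continuousOn
        · rw [interior_Ioc]
          exact fun s hs => (hgD s hs).differentiableAt.differentiableWithinAt
        · rw [interior_Ioc]
          exact hgderiv
      -- from monotonicity: (a/b)(e^{ct} - e^{cs}) ≤ (v t)⁻¹ for s ∈ (0, t]
      have hstep : ∀ s ∈ Set.Ioc (0:ℝ) t,
          (a/b) * (Real.exp (c*t) - Real.exp (c*s)) ≤ (v t)⁻¹ := by
        intro s hs
        have h1 : g s ≤ g t := hgmono hs ⟨ht, le_refl t⟩ hs.2
        have h2 : 0 < (v s)⁻¹ := inv_pos.mpr (hvpos s hs)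
        simp only [hg_def] at h1
        nlinarith
      -- take the limit s → 0⁺
      have hlim : Filter.Tendsto (fun s => (a/b) * (Real.exp (c*t) - Real.exp (c*s)))
          (nhdsWithin 0 (Set.Ioi 0)) (nhds ((a/b) * (Real.exp (c*t) - 1))) := by
        have hcont2 : Continuous (fun s : ℝ => (a/b) * (Real.exp (c*t) - Real.exp (c*s))) :=
          continuous_const.mul (continuous_const.sub (Real.continuous_exp.comp
            (continuous_const.mul continuous_id)))
        have h := (hcont2.tendsto 0).mono_left (nhdsWithin_le_nhds (s := Set.Ioi (0:ℝ)))
        simpa using h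
      have hkey2 : (a/b) * (Real.exp (c*t) - 1) ≤ (v t)⁻¹ := by
        apply le_of_tendsto hlim
        filter_upwards [Ioc_mem_nhdsGT_of_mem (Set.mem_Ico.mpr ⟨le_refl (0:ℝ), ht⟩)] with s hs
        exact hstep s hs
      -- conclude
      have hE1 : 1 < Real.exp (c*t) := Real.one_lt_exp_iff.mpr (mul_pos hc ht)
      have h3 : a * (Real.exp (c*t) - 1) * v t ≤ b := by
        have h4 : (a/b) * (Real.exp (c*t) - 1) * v t ≤ (v t)⁻¹ * v t :=
          mul_le_mul_of_nonneg_right hkey2 (hvnonneg t)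
        rw [inv_mul_cancel₀ hvt.ne'] at h4
        have h5 := mul_le_mul_of_nonneg_left h4 hb.le
        have h6 : b * ((a/b) * (Real.exp (c*t) - 1) * v t)
            = a * (Real.exp (c*t) - 1) * v t := by field_simp
        linarith [h6 ▸ h5]
      have hEF : Real.exp (c*t) * Real.exp (-(c*t)) = 1 := by
        rw [← Real.exp_add]; simp
      have hy : X t ^ (2*m) = Real.exp (c*t) * v t := by
        simp only [hv_def]
        rw [← mul_assoc, hEF, one_mul]
      rw [hy, le_div_iff₀ (mul_pos ha (by linarith : (0:ℝ) < 1 - Real.exp (-(c*t))))]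
      have hid : Real.exp (c*t) * v t * (a * (1 - Real.exp (-(c*t))))
          = a * (Real.exp (c*t) - 1) * v t := by
        linear_combination (-(a * v t)) * hEF
      rw [hid]
      exact h3
  constructor
  · exact hmain
  · -- |X t| ≤ B^{1/(2m)}
    have habs : X t ^ (2*m) = |X t| ^ (2*m) := by
      rw [Even.pow_abs ⟨m, by ring⟩]
    have hcast : ((2*m : ℕ) : ℝ) = 2*(m:ℝ) := by push_cast; ring
    have hone : ((2*m : ℕ) : ℝ) * ((1:ℝ)/(2*(m:ℝ))) = 1 := by
      rw [hcast]; field_simp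
    have hstep1 : |X t| = (|X t| ^ (2*m)) ^ ((1:ℝ)/(2*(m:ℝ))) := by
      rw [← Real.rpow_natCast |X t| (2*m), ← Real.rpow_mul (abs_nonneg _), hone, Real.rpow_one]
    rw [hstep1]
    apply Real.rpow_le_rpow (by positivity) (habs ▸ hmain) (by positivity)
end

section
/- Let l₃ > 0, l₄ > 0, p ≥ 1, m ≥ 1, and let z : [0,∞) → (0,∞) solve z'(t) = -l₃ z(t)^{1+2m/p} + l₄ with z(0) > z₁ := (2l₄/l₃)^{p/(2m+p)}. Let t* be the first time z(t*) = z₁. Then for t ∈ [0, t*], z(t)^{2m/p} ≤ z(0)^{2m/p} / ( (l₃ m/p) z(0)^{2m/p} t + 1 ) ≤ min( p/(l₃ m t), z(0)^{2m/p} ), and moreover t* ≤ ( z(0)^{2m/p} - z₁^{2m/p} ) / ( z₁^{2m/p} (l₃ m/p) z(0)^{2m/p} ). -/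
/-- comparison estimate for `z' = -l₃ z^{1+2m/p} + l₄` started above
`z₁ = (2l₄/l₃)^{p/(2m+p)}`, up to the first hitting time `t*` of `z₁`. -/
theorem stmt9 (m : ℕ) (hm : 1 ≤ m) (p l₃ l₄ : ℝ) (hp : 1 ≤ p)
    (h3 : 0 < l₃) (h4 : 0 < l₄)
    (z : ℝ → ℝ) (hzpos : ∀ t ≥ (0:ℝ), 0 < z t)
    (hODE : ∀ t ≥ (0:ℝ), HasDerivAt z (-l₃ * z t ^ ((1:ℝ) + 2*(m:ℝ)/p) + l₄) t)
    (tstar : ℝ) (htstar : 0 ≤ tstar)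
    (hz0 : (2*l₄/l₃) ^ (p/(2*(m:ℝ)+p)) < z 0)
    (hhit : z tstar = (2*l₄/l₃) ^ (p/(2*(m:ℝ)+p)))
    (hfirst : ∀ s : ℝ, 0 ≤ s → s < tstar → (2*l₄/l₃) ^ (p/(2*(m:ℝ)+p)) < z s) :
    (∀ t ∈ Set.Icc (0:ℝ) tstar,
      z t ^ (2*(m:ℝ)/p) ≤ z 0 ^ (2*(m:ℝ)/p) / ((l₃*(m:ℝ)/p) * z 0 ^ (2*(m:ℝ)/p) * t + 1))
    ∧ (∀ t : ℝ, 0 < t → t ≤ tstar →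
      z 0 ^ (2*(m:ℝ)/p) / ((l₃*(m:ℝ)/p) * z 0 ^ (2*(m:ℝ)/p) * t + 1)
        ≤ min (p/(l₃*(m:ℝ)*t)) (z 0 ^ (2*(m:ℝ)/p)))
    ∧ tstar ≤ (z 0 ^ (2*(m:ℝ)/p) - ((2*l₄/l₃) ^ (p/(2*(m:ℝ)+p))) ^ (2*(m:ℝ)/p)) /
        (((2*l₄/l₃) ^ (p/(2*(m:ℝ)+p))) ^ (2*(m:ℝ)/p) * (l₃*(m:ℝ)/p) * z 0 ^ (2*(m:ℝ)/p)) := by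
  have hp0 : (0:ℝ) < p := lt_of_lt_of_le one_pos hp
  have hm0 : (0:ℝ) < (m:ℝ) := by exact_mod_cast hm
  set A : ℝ := 2*(m:ℝ)/p with hAdef
  have hA0 : 0 < A := by positivity
  set c : ℝ := l₃*(m:ℝ)/p with hcdef
  have hc0 : 0 < c := by positivity
  have hcA : c = l₃ * A / 2 := by rw [hAdef, hcdef]; ring
  set z₁ : ℝ := (2*l₄/l₃) ^ (p/(2*(m:ℝ)+p)) with hz1def
  have hbase : (0:ℝ) < 2*l₄/l₃ := by positivity
  have hz1pos : 0 < z₁ := Real.rpow_pos_of_pos hbase _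
  have hz1pow : z₁ ^ (1 + A) = 2*l₄/l₃ := by
    rw [hz1def, ← Real.rpow_mul hbase.le,
      show p/(2*(m:ℝ)+p) * (1+A) = 1 by
        rw [hAdef]; field_simp; ring, Real.rpow_one]
  have hzlb : ∀ t ∈ Set.Icc (0:ℝ) tstar, z₁ ≤ z t := by
    intro t ht
    rcases eq_or_lt_of_le ht.2 with h | h
    · rw [h, hhit]
    · exact (hfirst t ht.1 h).le
  have hkey : ∀ t ∈ Set.Icc (0:ℝ) tstar, l₄ ≤ l₃/2 * z t ^ (1+A) := by
    intro t ht
    have h1 : z₁ ^ (1+A) ≤ z t ^ (1+A) :=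
      Real.rpow_le_rpow hz1pos.le (hzlb t ht) (by positivity)
    rw [hz1pow] at h1
    calc l₄ = l₃/2 * (2*l₄/l₃) := by field_simp
    _ ≤ l₃/2 * z t ^ (1+A) := by nlinarith
  -- derivative of the comparison function
  have hwderiv : ∀ t ≥ (0:ℝ), HasDerivAt (fun s => z s ^ (-A) - c*s)
      ((-l₃ * z t ^ ((1:ℝ)+2*(m:ℝ)/p) + l₄) * (-A) * z t ^ (-A-1) - c*1) t := by
    intro t ht
    exact ((hODE t ht).rpow_const (Or.inl (hzpos t ht).ne')).sub
      ((hasDerivAt_id t).const_mul c)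
  have hmono : MonotoneOn (fun s => z s ^ (-A) - c*s) (Set.Icc 0 tstar) := by
    apply monotoneOn_of_deriv_nonneg (convex_Icc 0 tstar)
    · intro t ht
      exact (hwderiv t ht.1).continuousAt.continuousWithinAt
    · rw [interior_Icc]
      intro t ht
      exact (hwderiv t ht.1.le).differentiableAt.differentiableWithinAt
    · rw [interior_Icc]
      intro t ht
      rw [(hwderiv t ht.1.le).deriv]
      have hzt : 0 < z t := hzpos t ht.1.le
      have htIcc : t ∈ Set.Icc (0:ℝ) tstar := ⟨ht.1.le, ht.2.le⟩
      have hk := hkey t htIcc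
      have hzpow : 0 < z t ^ (1+A) := Real.rpow_pos_of_pos hzt _
      have hmul : z t ^ ((1:ℝ)+2*(m:ℝ)/p) * z t ^ (-A-1) = 1 := by
        rw [← Real.rpow_add hzt, show (1:ℝ)+2*(m:ℝ)/p + (-A-1) = 0 by rw [hAdef]; ring,
          Real.rpow_zero]
      have hzneg : z t ^ (-A-1) = (z t ^ (1+A))⁻¹ := by
        rw [show -A-1 = -(1+A) by ring, Real.rpow_neg hzt.le]
      have hle : l₄ * z t ^ (-A-1) ≤ l₃/2 := by
        rw [hzneg, ← div_eq_mul_inv, div_le_iff₀ hzpow]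
        nlinarith
      have : (-l₃ * z t ^ ((1:ℝ)+2*(m:ℝ)/p) + l₄) * (-A) * z t ^ (-A-1)
          = A * l₃ * (z t ^ ((1:ℝ)+2*(m:ℝ)/p) * z t ^ (-A-1)) - A * (l₄ * z t ^ (-A-1)) := by
        ring
      rw [this, hmul]
      rw [hcA]
      nlinarith
  have hineq : ∀ t ∈ Set.Icc (0:ℝ) tstar, z 0 ^ (-A) + c*t ≤ z t ^ (-A) := by
    intro t ht
    have h := hmono (Set.left_mem_Icc.mpr htstar) ht ht.1
    simp only [mul_zero, sub_zero] at h
    linarith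
  have hz0p : 0 < z 0 := hzpos 0 le_rfl
  have hX0 : 0 < z 0 ^ A := Real.rpow_pos_of_pos hz0p A
  have hpart1 : ∀ t ∈ Set.Icc (0:ℝ) tstar, z t ^ A ≤ z 0 ^ A / (c * z 0 ^ A * t + 1) := by
    intro t ht
    have hzt := hzpos t ht.1
    have hXt : 0 < z t ^ A := Real.rpow_pos_of_pos hzt A
    have h := hineq t ht
    rw [Real.rpow_neg hzt.le, Real.rpow_neg hz0p.le] at h
    have hden : 0 < c * z 0 ^ A * t + 1 := by
      have := ht.1; positivity
    rw [le_div_iff₀ hden]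
    have e1 : z t ^ A * (z t ^ A)⁻¹ = 1 := mul_inv_cancel₀ hXt.ne'
    have e2 : z 0 ^ A * (z 0 ^ A)⁻¹ = 1 := mul_inv_cancel₀ hX0.ne'
    nlinarith [mul_le_mul_of_nonneg_left h (mul_pos hXt hX0).le]
  refine ⟨hpart1, fun t ht0 htle => ?_, ?_⟩
  · have hden : 0 < c * z 0 ^ A * t + 1 := by positivity
    refine le_min ?_ ?_
    · rw [div_le_div_iff₀ hden (by positivity)]
      calc z 0 ^ A * (l₃*(m:ℝ)*t) = p * (c * z 0 ^ A * t) + 0 := by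
            rw [hcdef]; field_simp; ring
        _ ≤ p * (c * z 0 ^ A * t) + p := by linarith
        _ = p * (c * z 0 ^ A * t + 1) := by ring
    · rw [div_le_iff₀ hden]
      have hnn : 0 ≤ z 0 ^ A * (c * z 0 ^ A * t) := by positivity
      calc z 0 ^ A = z 0 ^ A * 1 := by ring
        _ ≤ z 0 ^ A * (c * z 0 ^ A * t) + z 0 ^ A * 1 := by linarith
        _ = z 0 ^ A * (c * z 0 ^ A * t + 1) := by ring
  · have h := hpart1 tstar (Set.right_mem_Icc.mpr htstar)
    rw [hhit] at h
    have hz1A : 0 < z₁ ^ A := Real.rpow_pos_of_pos hz1pos A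
    have hden : 0 < c * z 0 ^ A * tstar + 1 := by positivity
    rw [le_div_iff₀ hden] at h
    rw [le_div_iff₀ (by positivity)]
    nlinarith [h]
end

section
/- Let ε > 0, λ > 0, Φ_t^λ the phase flow of X' = -(1/ε)f(X) + λX with f(ξ) = Σ_{j=1}^{2m+1} a_j ξ^j, a_{2m+1} > 0, and define Ψ_t^λ(ξ) = (Φ_t^λ(ξ) - ξ)/t for t > 0 and Ψ_0^λ(ξ) = -(1/ε)f(ξ) + λξ. Then there exists C > 0 such that for all t ∈ (0,1) and ξ ∈ ℝ, |Ψ_t^λ(ξ) - Ψ_0^λ(ξ)| ≤ C (1/ε + λ) t (1 + |ξ|^{4m+1}). -/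
set_option maxHeartbeats 1000000

section Helpers

lemma pow_le_one_add_pow {u : ℝ} (hu : 0 ≤ u) {j n : ℕ} (h : j ≤ n) : u ^ j ≤ 1 + u ^ n := by
  rcases le_total u 1 with h1 | h1
  · have h2 : u ^ j ≤ 1 := pow_le_one₀ hu h1
    have := pow_nonneg hu n
    linarith
  · have h2 : u ^ j ≤ u ^ n := pow_le_pow_right₀ h1 h
    linarith

end Helpers

lemma add_pow_le' {x y : ℝ} (hx : 0 ≤ x) (hy : 0 ≤ y) (n : ℕ) :
    (x + y) ^ n ≤ 2 ^ n * (x ^ n + y ^ n) := by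
  have h1 : x + y ≤ 2 * max x y := by
    rcases le_total x y with h | h
    · simp [max_eq_right h]; linarith
    · simp [max_eq_left h]; linarith
  calc (x+y)^n ≤ (2 * max x y)^n := pow_le_pow_left₀ (by positivity) h1 n
    _ = 2^n * (max x y)^n := by rw [mul_pow]
    _ ≤ 2^n * (x^n + y^n) := by
        apply mul_le_mul_of_nonneg_left _ (by positivity)
        rcases le_total x y with h | h
        · rw [max_eq_right h]; nlinarith [pow_nonneg hx n]
        · rw [max_eq_left h]; nlinarith [pow_nonneg hy n]
lemma exists_confine (m : ℕ) (hm : 1 ≤ m) (a : ℕ → ℝ) (ha : 0 < a (2*m+1))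
    (ε lam : ℝ) (hε : 0 < ε) (hlam : 0 < lam) :
    ∃ K : ℝ, 0 ≤ K ∧ ∀ x : ℝ,
      x * (-(1/ε) * (∑ j ∈ Finset.Icc 1 (2*m+1), a j * x ^ j) + lam * x) ≤ K := by
  set g : ℝ → ℝ := fun x => -(1/ε) * (∑ j ∈ Finset.Icc 1 (2*m+1), a j * x ^ j) + lam * x with hg
  set A : ℝ := ∑ j ∈ Finset.Icc 1 (2*m+1), |a j| with hA
  have hA0 : 0 ≤ A := Finset.sum_nonneg fun j _ => abs_nonneg _
  set R : ℝ := max 1 ((lam + A/ε) * ε / a (2*m+1)) with hR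
  have hR1 : (1:ℝ) ≤ R := le_max_left _ _
  -- outside [-R,R], x * g x ≤ 0
  have hout : ∀ x : ℝ, R ≤ |x| → x * g x ≤ 0 := by
    intro x hx
    have hx1 : (1:ℝ) ≤ |x| := le_trans hR1 hx
    have hsplit : (∑ j ∈ Finset.Icc 1 (2*m+1), a j * x ^ j)
        = (∑ j ∈ Finset.Icc 1 (2*m), a j * x ^ j) + a (2*m+1) * x ^ (2*m+1) := by
      have : (1:ℕ) ≤ 2*m+1 := by omega
      rw [← Finset.sum_Icc_succ_top this]
    have hbsum : |∑ j ∈ Finset.Icc 1 (2*m), a j * x ^ j| ≤ A * |x| ^ (2*m) := by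
      calc |∑ j ∈ Finset.Icc 1 (2*m), a j * x ^ j|
          ≤ ∑ j ∈ Finset.Icc 1 (2*m), |a j * x ^ j| := Finset.abs_sum_le_sum_abs _ _
        _ ≤ ∑ j ∈ Finset.Icc 1 (2*m), |a j| * |x| ^ (2*m) := by
            apply Finset.sum_le_sum
            intro j hj
            rw [abs_mul, abs_pow]
            apply mul_le_mul_of_nonneg_left _ (abs_nonneg _)
            exact pow_le_pow_right₀ hx1 (Finset.mem_Icc.mp hj).2
        _ ≤ A * |x| ^ (2*m) := by
            rw [← Finset.sum_mul]
            apply mul_le_mul_of_nonneg_right _ (by positivity)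
            apply Finset.sum_le_sum_of_subset_of_nonneg
            · intro j hj; simp only [Finset.mem_Icc] at *; omega
            · intro j _ _; exact abs_nonneg _
    set S : ℝ := ∑ j ∈ Finset.Icc 1 (2*m), a j * x ^ j with hS
    set u : ℝ := |x| with hu
    have hu0 : (0:ℝ) ≤ u := abs_nonneg x
    have heq : x * g x = lam * x^2 - (1/ε) * (x * S) - (1/ε) * (a (2*m+1) * x^(2*m+2)) := by
      simp only [hg]
      rw [hsplit]
      ring
    have hxS : |x * S| ≤ A * u ^ (2*m+1) := by
      rw [abs_mul]
      calc |x| * |S| ≤ |x| * (A * u ^ (2*m)) := by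
            apply mul_le_mul_of_nonneg_left hbsum (abs_nonneg x)
        _ = A * u ^ (2*m+1) := by rw [pow_succ]; ring
    have hx2 : x^2 ≤ u^(2*m+1) := by
      have h1 : x^2 = u^2 := (sq_abs x).symm
      rw [h1]
      exact pow_le_pow_right₀ hx1 (by omega)
    have hpow : x^(2*m+2) = u^(2*m+1) * u := by
      have h1 : x^(2*m+2) = u^(2*m+2) := by
        rw [hu, ← abs_pow, abs_of_nonneg]
        exact Even.pow_nonneg ⟨m+1, by ring⟩ x
      rw [h1, ← pow_succ]
    have hfac2 : lam * ε + A ≤ a (2*m+1) * u := by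
      have h1 : (lam + A/ε) * ε / a (2*m+1) ≤ u := le_trans (le_max_right _ _) hx
      rw [div_le_iff₀ ha] at h1
      have h2 : (lam + A/ε) * ε = lam * ε + A := by field_simp
      linarith [h1]
    have hxS1 : -(A * u^(2*m+1)) ≤ x * S := (abs_le.mp hxS).1
    have hkey : 0 ≤ u^(2*m+1) * (a (2*m+1) * u - (lam * ε + A)) :=
      mul_nonneg (by positivity) (by linarith)
    have goal2 : lam * ε * x^2 - x * S - a (2*m+1) * (u^(2*m+1) * u) ≤ 0 := by
      nlinarith [mul_le_mul_of_nonneg_left hx2 (by positivity : (0:ℝ) ≤ lam * ε)]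
    have heq2 : x * g x = (1/ε) * (lam * ε * x^2 - x * S - a (2*m+1) * (u^(2*m+1) * u)) := by
      rw [heq, hpow]
      field_simp
    rw [heq2]
    exact mul_nonpos_of_nonneg_of_nonpos (by positivity) goal2
  -- max on the compact part
  have hcont : Continuous fun x : ℝ => x * g x := by
    simp only [hg]; fun_prop
  obtain ⟨x₀, _, hmax⟩ := isCompact_Icc.exists_isMaxOn (s := Set.Icc (-R) R)
    ⟨0, by constructor <;> linarith⟩ hcont.continuousOn
  refine ⟨max (x₀ * g x₀) 0, le_max_right _ _, ?_⟩
  intro x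
  rcases le_total |x| R with h | h
  · have hx : x ∈ Set.Icc (-R) R := by
      exact Set.mem_Icc.mpr (abs_le.mp h)
    exact le_trans (hmax hx) (le_max_left _ _)
  · exact le_trans (hout x h) (le_max_right _ _)

/-- the increment quotient `Ψ_t^λ(ξ) = (Φ_t^λ(ξ) - ξ)/t` approximates
`Ψ_0^λ(ξ) = -(1/ε)f(ξ) + λξ` to first order in `t`:
`|Ψ_t^λ(ξ) - Ψ_0^λ(ξ)| ≤ C(1/ε+λ)t(1+|ξ|^{4m+1})` for `t ∈ (0,1)`. -/
theorem stmt15 (m : ℕ) (hm : 1 ≤ m) (a : ℕ → ℝ) (ha : 0 < a (2*m+1))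
    (ε lam : ℝ) (hε : 0 < ε) (hlam : 0 < lam)
    (f : ℝ → ℝ)
    (hf : ∀ ξ : ℝ, f ξ = ∑ j ∈ Finset.Icc 1 (2*m+1), a j * ξ ^ j)
    (Φ : ℝ → ℝ → ℝ)
    (hΦ0 : ∀ ξ : ℝ, Φ 0 ξ = ξ)
    (hΦode : ∀ ξ : ℝ, ∀ t ≥ (0:ℝ),
      HasDerivAt (fun s => Φ s ξ) (-(1/ε) * f (Φ t ξ) + lam * Φ t ξ) t) :
    ∃ C > (0:ℝ), ∀ t ∈ Set.Ioo (0:ℝ) 1, ∀ ξ : ℝ,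
      |(Φ t ξ - ξ)/t - (-(1/ε) * f ξ + lam * ξ)|
        ≤ C * (1/ε + lam) * t * (1 + |ξ| ^ (4*m+1)) := by
  set A : ℝ := ∑ j ∈ Finset.Icc 1 (2*m+1), |a j| with hA
  have hA0 : 0 ≤ A := Finset.sum_nonneg fun j _ => abs_nonneg _
  set g : ℝ → ℝ := fun x => -(1/ε) * (∑ j ∈ Finset.Icc 1 (2*m+1), a j * x ^ j) + lam * x with hg
  set gd : ℝ → ℝ := fun x => -(1/ε) * (∑ j ∈ Finset.Icc 1 (2*m+1), a j * ((j:ℝ) * x ^ (j-1))) + lam with hgd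
  have hgf : ∀ x : ℝ, -(1/ε) * f x + lam * x = g x := fun x => by rw [hf x]
  -- derivative of g
  have hderiv : ∀ x : ℝ, HasDerivAt g (gd x) x := by
    intro x
    have h1 : HasDerivAt (fun x : ℝ => ∑ j ∈ Finset.Icc 1 (2*m+1), a j * x ^ j)
        (∑ j ∈ Finset.Icc 1 (2*m+1), a j * ((j:ℝ) * x ^ (j-1))) x :=
      HasDerivAt.fun_sum fun j _ => (hasDerivAt_pow j x).const_mul (a j)
    have h2 : HasDerivAt (fun x : ℝ => lam * x) lam x := by
      simpa using (hasDerivAt_id x).const_mul lam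
    exact (h1.const_mul (-(1/ε))).add h2
  -- constants
  obtain ⟨K, hK0, hK⟩ := exists_confine m hm a ha ε lam hε hlam
  set B : ℝ := Real.sqrt (2*K) with hB
  have hB0 : 0 ≤ B := Real.sqrt_nonneg _
  set C₁ : ℝ := (1/ε)*A + lam with hC₁
  set C₂ : ℝ := (1/ε)*((2*m+1)*A) + lam with hC₂
  have hC₁0 : 0 < C₁ := by positivity
  have hC₂0 : 0 < C₂ := by positivity
  set C₀ : ℝ := 3*C₁*C₂*(1 + 2^(4*m+1)*(1 + B^(4*m+1))) with hC₀
  have hC₀0 : 0 < C₀ := by positivity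
  have hεlam : (0:ℝ) < 1/ε + lam := by positivity
  refine ⟨C₀ / (1/ε + lam), by positivity, ?_⟩
  intro t ht ξ
  obtain ⟨ht0, ht1⟩ := ht
  -- bound on g
  have hgb : ∀ M : ℝ, 0 ≤ M → ∀ x : ℝ, |x| ≤ M → |g x| ≤ C₁ * (1 + M^(2*m+1)) := by
    intro M hM x hx
    have hsum : |∑ j ∈ Finset.Icc 1 (2*m+1), a j * x ^ j| ≤ A * (1 + M^(2*m+1)) := by
      calc |∑ j ∈ Finset.Icc 1 (2*m+1), a j * x ^ j|
          ≤ ∑ j ∈ Finset.Icc 1 (2*m+1), |a j * x ^ j| := Finset.abs_sum_le_sum_abs _ _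
        _ ≤ ∑ j ∈ Finset.Icc 1 (2*m+1), |a j| * (1 + M^(2*m+1)) := by
            apply Finset.sum_le_sum
            intro j hj
            rw [abs_mul, abs_pow]
            apply mul_le_mul_of_nonneg_left _ (abs_nonneg _)
            calc |x| ^ j ≤ M ^ j := pow_le_pow_left₀ (abs_nonneg x) hx j
              _ ≤ 1 + M^(2*m+1) := pow_le_one_add_pow hM (Finset.mem_Icc.mp hj).2
        _ = A * (1 + M^(2*m+1)) := by rw [← Finset.sum_mul]
    have hxM : |x| ≤ 1 + M^(2*m+1) :=
      le_trans hx (by simpa using pow_le_one_add_pow hM (show 1 ≤ 2*m+1 by omega))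
    have h3 : |g x| ≤ (1/ε) * |∑ j ∈ Finset.Icc 1 (2*m+1), a j * x ^ j| + lam * |x| := by
      simp only [hg]
      calc |(-(1/ε) * (∑ j ∈ Finset.Icc 1 (2*m+1), a j * x ^ j) + lam * x)|
          ≤ |(-(1/ε)) * (∑ j ∈ Finset.Icc 1 (2*m+1), a j * x ^ j)| + |lam * x| := abs_add_le _ _
        _ = (1/ε) * |∑ j ∈ Finset.Icc 1 (2*m+1), a j * x ^ j| + lam * |x| := by
            rw [abs_mul, abs_mul, abs_neg, abs_of_pos (by positivity : (0:ℝ) < 1/ε),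
              abs_of_pos hlam]
    have hinv : (0:ℝ) ≤ 1/ε := by positivity
    rw [hC₁]
    nlinarith [mul_le_mul_of_nonneg_left hsum hinv, mul_le_mul_of_nonneg_left hxM hlam.le]
  -- bound on gd
  have hgdb : ∀ M : ℝ, 0 ≤ M → ∀ x : ℝ, |x| ≤ M → |gd x| ≤ C₂ * (1 + M^(2*m)) := by
    intro M hM x hx
    have hsum : |∑ j ∈ Finset.Icc 1 (2*m+1), a j * ((j:ℝ) * x ^ (j-1))|
        ≤ A * ((2*m+1) * (1 + M^(2*m))) := by
      calc |∑ j ∈ Finset.Icc 1 (2*m+1), a j * ((j:ℝ) * x ^ (j-1))|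
          ≤ ∑ j ∈ Finset.Icc 1 (2*m+1), |a j * ((j:ℝ) * x ^ (j-1))| := Finset.abs_sum_le_sum_abs _ _
        _ ≤ ∑ j ∈ Finset.Icc 1 (2*m+1), |a j| * ((2*m+1) * (1 + M^(2*m))) := by
            apply Finset.sum_le_sum
            intro j hj
            rw [abs_mul, abs_mul, abs_pow]
            apply mul_le_mul_of_nonneg_left _ (abs_nonneg _)
            have hj' := Finset.mem_Icc.mp hj
            have hjc : |(j:ℝ)| ≤ (2*m+1 : ℝ) := by
              rw [abs_of_nonneg (by positivity)]
              exact_mod_cast hj'.2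
            have hxp : |x| ^ (j-1) ≤ 1 + M^(2*m) := by
              calc |x| ^ (j-1) ≤ M ^ (j-1) := pow_le_pow_left₀ (abs_nonneg x) hx _
                _ ≤ 1 + M^(2*m) := pow_le_one_add_pow hM (by omega)
            have h1 : (0:ℝ) ≤ |x| ^ (j-1) := by positivity
            have h2 : (0:ℝ) ≤ 1 + M^(2*m) := by positivity
            nlinarith [abs_nonneg (j:ℝ)]
        _ = A * ((2*m+1) * (1 + M^(2*m))) := by rw [← Finset.sum_mul]
    have hinv : (0:ℝ) ≤ 1/ε := by positivity
    have h3 : |gd x| ≤ (1/ε) * |∑ j ∈ Finset.Icc 1 (2*m+1), a j * ((j:ℝ) * x ^ (j-1))| + lam := by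
      simp only [hgd]
      calc |(-(1/ε) * (∑ j ∈ Finset.Icc 1 (2*m+1), a j * ((j:ℝ) * x ^ (j-1))) + lam)|
          ≤ |(-(1/ε)) * (∑ j ∈ Finset.Icc 1 (2*m+1), a j * ((j:ℝ) * x ^ (j-1)))| + |lam| := abs_add_le _ _
        _ = (1/ε) * |∑ j ∈ Finset.Icc 1 (2*m+1), a j * ((j:ℝ) * x ^ (j-1))| + lam := by
            rw [abs_mul, abs_neg, abs_of_pos (by positivity : (0:ℝ) < 1/ε), abs_of_pos hlam]
    have hMp : (0:ℝ) ≤ M^(2*m) := by positivity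
    rw [hC₂]
    nlinarith [mul_le_mul_of_nonneg_left hsum hinv]
  -- the flow confinement
  set M : ℝ := |ξ| + B with hM
  have hM0 : 0 ≤ M := by positivity
  have hξM : |ξ| ≤ M := by rw [hM]; linarith
  have hode : ∀ s : ℝ, 0 ≤ s → HasDerivAt (fun s => Φ s ξ) (g (Φ s ξ)) s := by
    intro s hs
    have h1 := hΦode ξ s hs
    rwa [hgf] at h1
  have hΦM : ∀ s ∈ Set.Icc (0:ℝ) 1, |Φ s ξ| ≤ M := by
    have hanti : AntitoneOn (fun s => (Φ s ξ)^2 - 2*K*s) (Set.Icc 0 1) := by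
      apply antitoneOn_of_hasDerivWithinAt_nonpos (f' := fun s => 2*(Φ s ξ)*(g (Φ s ξ)) - 2*K)
        (convex_Icc 0 1)
      · apply ContinuousOn.sub
        · exact ContinuousOn.pow
            (fun s hs => ((hode s hs.1).continuousAt.continuousWithinAt)) 2
        · fun_prop
      · intro x hx
        rw [interior_Icc] at hx
        have hd := hode x hx.1.le
        have h1 := hd.fun_pow 2
        have h2 : HasDerivAt (fun s : ℝ => 2*K*s) (2*K) x := by
          simpa using (hasDerivAt_id x).const_mul (2*K)
        have h3 := h1.fun_sub h2
        have h4 : HasDerivAt (fun s => (Φ s ξ)^2 - 2*K*s) (2*(Φ x ξ)*(g (Φ x ξ)) - 2*K) x := by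
          exact h3.congr_deriv (by push_cast; ring)
        exact h4.hasDerivWithinAt
      · intro x hx
        have := hK (Φ x ξ)
        simp only [hg]
        nlinarith [hK (Φ x ξ)]
    intro s hs
    have h1 : (fun s => (Φ s ξ)^2 - 2*K*s) s ≤ (fun s => (Φ s ξ)^2 - 2*K*s) 0 :=
      hanti (Set.mem_Icc.mpr ⟨le_refl 0, zero_le_one⟩) hs hs.1
    simp only [hΦ0, mul_zero, sub_zero] at h1
    have h2 : (Φ s ξ)^2 ≤ ξ^2 + 2*K := by
      have hs1 : s ≤ 1 := hs.2
      nlinarith [hs.1]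
    have hB2 : B^2 = 2*K := Real.sq_sqrt (by positivity)
    have h3 : (Φ s ξ)^2 ≤ M^2 := by
      rw [hM]
      nlinarith [abs_nonneg ξ, sq_abs ξ]
    calc |Φ s ξ| = Real.sqrt ((Φ s ξ)^2) := (Real.sqrt_sq_eq_abs _).symm
      _ ≤ Real.sqrt (M^2) := Real.sqrt_le_sqrt h3
      _ = M := Real.sqrt_sq hM0
  -- speed bound : |Φ s ξ - ξ| ≤ C₁(1+M^{2m+1}) s on [0,1]
  set S : ℝ := C₁ * (1 + M^(2*m+1)) with hS
  have hS0 : 0 ≤ S := by positivity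
  have hspeed : ∀ s ∈ Set.Icc (0:ℝ) 1, |Φ s ξ - ξ| ≤ S * s := by
    intro s hs
    have h1 := Convex.norm_image_sub_le_of_norm_hasDerivWithin_le
      (f := fun s => Φ s ξ) (f' := fun s => g (Φ s ξ)) (s := Set.Icc (0:ℝ) 1)
      (fun z hz => (hode z hz.1).hasDerivWithinAt)
      (fun z hz => by
        rw [Real.norm_eq_abs]
        exact hgb M hM0 _ (hΦM z hz))
      (convex_Icc _ _) (Set.mem_Icc.mpr ⟨le_refl 0, zero_le_one⟩) hs
    simp only [hΦ0, Real.norm_eq_abs, sub_zero] at h1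
    rwa [abs_of_nonneg hs.1] at h1
  -- Lipschitz bound on [-M, M]
  set L : ℝ := C₂ * (1 + M^(2*m)) with hL
  have hL0 : 0 ≤ L := by positivity
  have hLip : ∀ x y : ℝ, |x| ≤ M → |y| ≤ M → |g x - g y| ≤ L * |x - y| := by
    intro x y hx hy
    have := Convex.norm_image_sub_le_of_norm_hasDerivWithin_le
      (f := g) (f' := gd) (s := Set.Icc (-M) M)
      (fun z hz => (hderiv z).hasDerivWithinAt)
      (fun z hz => by
        rw [Real.norm_eq_abs]
        exact hgdb M hM0 z (abs_le.mpr hz))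
      (convex_Icc _ _) (Set.mem_Icc.mpr (abs_le.mp hy)) (Set.mem_Icc.mpr (abs_le.mp hx))
    simpa [Real.norm_eq_abs] using this
  -- second order bound via w
  have hw : |Φ t ξ - t * g ξ - ξ| ≤ (L * (S * t)) * t := by
    have h1 := Convex.norm_image_sub_le_of_norm_hasDerivWithin_le
      (f := fun s => Φ s ξ - s * g ξ) (f' := fun s => g (Φ s ξ) - g ξ) (s := Set.Icc (0:ℝ) t)
      (fun z hz => ((hode z hz.1).sub (hasDerivAt_mul_const (g ξ))).hasDerivWithinAt)
      (fun z hz => by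
        rw [Real.norm_eq_abs]
        have hz1 : z ∈ Set.Icc (0:ℝ) 1 := ⟨hz.1, le_trans hz.2 ht1.le⟩
        calc |g (Φ z ξ) - g ξ| ≤ L * |Φ z ξ - ξ| := hLip _ _ (hΦM z hz1) hξM
          _ ≤ L * (S * z) := mul_le_mul_of_nonneg_left (hspeed z hz1) hL0
          _ ≤ L * (S * t) := by
              apply mul_le_mul_of_nonneg_left _ hL0
              exact mul_le_mul_of_nonneg_left hz.2 hS0
        )
      (convex_Icc _ _) (Set.mem_Icc.mpr ⟨le_refl 0, ht0.le⟩)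
      (Set.mem_Icc.mpr ⟨ht0.le, le_refl t⟩)
    simp only [hΦ0, Real.norm_eq_abs, zero_mul, sub_zero] at h1
    rwa [abs_of_nonneg ht0.le] at h1
  -- final computation
  rw [hgf ξ]
  have heq : (Φ t ξ - ξ)/t - g ξ = (Φ t ξ - t * g ξ - ξ)/t := by
    field_simp
    ring
  rw [heq, abs_div, abs_of_pos ht0, div_le_iff₀ ht0]
  have hmain : |Φ t ξ - t * g ξ - ξ| ≤ L * S * t * t := by
    calc |Φ t ξ - t * g ξ - ξ| ≤ (L * (S * t)) * t := hw
      _ = L * S * t * t := by ring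
  refine le_trans hmain ?_
  -- now show L * S * t * t ≤ (C₀/(1/ε+lam)) * (1/ε+lam) * t * (1+|ξ|^{4m+1}) * t
  have hCc : C₀ / (1/ε + lam) * (1/ε + lam) = C₀ := div_mul_cancel₀ _ (ne_of_gt hεlam)
  have hLS : L * S ≤ C₀ * (1 + |ξ|^(4*m+1)) := by
    have hMpow : M^(2*m) * M^(2*m+1) = M^(4*m+1) := by
      rw [← pow_add]
      congr 1
      omega
    have h1 : (1 + M^(2*m)) * (1 + M^(2*m+1)) ≤ 3 * (1 + M^(4*m+1)) := by
      have e1 : M^(2*m) ≤ 1 + M^(4*m+1) := pow_le_one_add_pow hM0 (by omega)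
      have e2 : M^(2*m+1) ≤ 1 + M^(4*m+1) := pow_le_one_add_pow hM0 (by omega)
      nlinarith [pow_nonneg hM0 (4*m+1)]
    have h2 : 1 + M^(4*m+1) ≤ (1 + 2^(4*m+1)*(1 + B^(4*m+1))) * (1 + |ξ|^(4*m+1)) := by
      have e1 : M^(4*m+1) ≤ 2^(4*m+1) * (|ξ|^(4*m+1) + B^(4*m+1)) := by
        rw [hM]
        exact add_pow_le' (abs_nonneg ξ) hB0 _
      have e2 : (0:ℝ) ≤ |ξ|^(4*m+1) := by positivity
      have e3 : (0:ℝ) ≤ B^(4*m+1) := by positivity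
      have e4 : (0:ℝ) < (2:ℝ)^(4*m+1) := by positivity
      nlinarith [mul_nonneg e3 e2]
    calc L * S = (C₁ * C₂) * ((1 + M^(2*m)) * (1 + M^(2*m+1))) := by rw [hL, hS]; ring
      _ ≤ (C₁ * C₂) * (3 * (1 + M^(4*m+1))) := by
          apply mul_le_mul_of_nonneg_left h1 (by positivity)
      _ = (3 * C₁ * C₂) * (1 + M^(4*m+1)) := by ring
      _ ≤ (3 * C₁ * C₂) * ((1 + 2^(4*m+1)*(1 + B^(4*m+1))) * (1 + |ξ|^(4*m+1))) := by
          apply mul_le_mul_of_nonneg_left h2 (by positivity)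
      _ = C₀ * (1 + |ξ|^(4*m+1)) := by rw [hC₀]; ring
  calc L * S * t * t ≤ C₀ * (1 + |ξ|^(4*m+1)) * t * t := by
        apply mul_le_mul_of_nonneg_right _ ht0.le
        exact mul_le_mul_of_nonneg_right hLS ht0.le
    _ = C₀ / (1/ε + lam) * (1/ε + lam) * t * (1 + |ξ|^(4*m+1)) * t := by rw [hCc]; ring
end
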